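/- arXiv:1504.04133 — 3 statements merged into one kernel-verified Lean document; each statement's English description precedes it below -/
import Mathlib

section
/- (Theorem 1, BEC instantiation) Let ε ∈ [0,1], n a natural number, and N = 2^n. Define Z_ε(i) for i ∈ Fin N as the Bhattacharyya parameter obtained from the n-bit binary expansion of i. Suppose A ⊆ Fin N is an information set chosen by the polar coding principle, i.e., Z_ε(j) < Z_ε(i) for every j ∈ A and every i ∉ A. Then for every j ∈ A and every i ∉ A, the entry G_{i,j} of G = F^{⊗n} over GF(2) is zero; in other words, no row of G indexed outside A intersects a column of G indexed inside A. -/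
/-- The basic polar kernel `F = [[1,0],[1,1]]` over `GF(2)`. -/
def polarF : Matrix (Fin 2) (Fin 2) (ZMod 2) := !![1, 0; 1, 1]

/-- The `n`-fold Kronecker power `G = F^{⊗n}` of the polar kernel over `GF(2)`,
indexed by `Fin (2^n)` (0-indexed), where the first Kronecker factor corresponds
to the most significant bit of the index. -/
def polarG : (n : ℕ) → Matrix (Fin (2 ^ n)) (Fin (2 ^ n)) (ZMod 2)
  | 0 => 1
  | n + 1 =>
    Matrix.reindex
      (finProdFinEquiv.trans (finCongr (by ring)))
      (finProdFinEquiv.trans (finCongr (by ring)))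
      (Matrix.kroneckerMap (· * ·) polarF (polarG n))
/-- The Bhattacharyya parameter of the BEC bit channel described by the bit string
`b : Fin n → Bool`: starting from the erasure probability `ε`, the bits are processed
from index `n-1` (most significant) down to index `0`, replacing the current value `z`
by `z^2` if the bit is `true` and by `2z - z^2` if the bit is `false`. -/
def Zrec (ε : ℝ) : (n : ℕ) → (Fin n → Bool) → ℝ
  | 0, _ => ε
  | n + 1, b =>
    let z := Zrec ε n fun m => b m.succ
    if b 0 then z ^ 2 else 2 * z - z ^ 2

/-- The Bhattacharyya parameter of bit channel `i`, obtained from the `n`-bit binary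
expansion of `i`. -/
def Zbit (ε : ℝ) (n : ℕ) (i : Fin (2 ^ n)) : ℝ :=
  Zrec ε n fun m => Nat.testBit (i : ℕ) (m : ℕ)

/-! Both sides are governed by the bitwise partial order on indices. Since `F` is lower
triangular, so is its Kronecker power in that order: `G i j ≠ 0` only if every bit of `j` is a
bit of `i`. On `[0,1]` both BEC maps `z ↦ z ^ 2` and `z ↦ 2z - z ^ 2` are monotone and the first
lies below the second, so `Z_ε` is antitone in the same order. Hence `G i j ≠ 0` forces
`Z_ε(i) ≤ Z_ε(j)`, which the polar choice of `A` rules out for `j ∈ A`, `i ∉ A`. -/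

open Set

def becPolarStep (b : Bool) (z : ℝ) : ℝ := if b then z ^ 2 else 2 * z - z ^ 2

lemma Zrec_succ (ε : ℝ) (n : ℕ) (b : Fin (n + 1) → Bool) :
    Zrec ε (n + 1) b = becPolarStep (b 0) (Zrec ε n (Fin.tail b)) := rfl

lemma becPolarStep_mem_Icc (b : Bool) {z : ℝ} (hz : z ∈ Icc (0 : ℝ) 1) :
    becPolarStep b z ∈ Icc (0 : ℝ) 1 := by
  obtain ⟨h0, h1⟩ := hz
  cases b <;> simp only [becPolarStep, Bool.false_eq_true, if_true, if_false] <;>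
    exact ⟨by nlinarith, by nlinarith⟩

lemma becPolarStep_monotoneOn (b : Bool) : MonotoneOn (becPolarStep b) (Icc 0 1) := by
  intro z ⟨hz0, _⟩ w ⟨_, hw1⟩ hzw
  cases b <;> simp only [becPolarStep, Bool.false_eq_true, if_true, if_false] <;> nlinarith

lemma becPolarStep_antitone_bit {z : ℝ} (hz : z ∈ Icc (0 : ℝ) 1) :
    Antitone fun b => becPolarStep b z := by
  obtain ⟨h0, h1⟩ := hz
  intro b c hbc
  cases b <;> cases c
  · exact le_rfl
  · simp only [becPolarStep, Bool.false_eq_true, if_true, if_false]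
    nlinarith
  · exact absurd hbc (by decide)
  · exact le_rfl

lemma Zrec_mem_Icc {ε : ℝ} (hε : ε ∈ Icc (0 : ℝ) 1) :
    ∀ n (b : Fin n → Bool), Zrec ε n b ∈ Icc (0 : ℝ) 1
  | 0, _ => hε
  | n + 1, b => becPolarStep_mem_Icc (b 0) (Zrec_mem_Icc hε n (Fin.tail b))

lemma Zrec_antitone {ε : ℝ} (hε : ε ∈ Icc (0 : ℝ) 1) : ∀ n, Antitone (Zrec ε n)
  | 0 => fun _ _ _ => le_rfl
  | n + 1 => fun b c hbc => by
    have htail := Zrec_antitone hε n (fun m => hbc m.succ : Fin.tail b ≤ Fin.tail c)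
    rw [Zrec_succ, Zrec_succ]
    calc becPolarStep (c 0) (Zrec ε n (Fin.tail c))
        ≤ becPolarStep (c 0) (Zrec ε n (Fin.tail b)) :=
          becPolarStep_monotoneOn _ (Zrec_mem_Icc hε _ _) (Zrec_mem_Icc hε _ _) htail
      _ ≤ becPolarStep (b 0) (Zrec ε n (Fin.tail b)) :=
          becPolarStep_antitone_bit (Zrec_mem_Icc hε _ _) (hbc 0)

def polarIndex (n : ℕ) : Fin 2 × Fin (2 ^ n) ≃ Fin (2 ^ (n + 1)) :=
  finProdFinEquiv.trans (finCongr (by ring))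

lemma polarIndex_val (n : ℕ) (a : Fin 2) (i : Fin (2 ^ n)) :
    (polarIndex n (a, i) : ℕ) = 2 ^ n * a + i := by
  simp [polarIndex, add_comm]

lemma testBit_polarIndex (n : ℕ) (a : Fin 2) (i : Fin (2 ^ n)) (m : ℕ) :
    (polarIndex n (a, i) : ℕ).testBit m =
      if m < n then (i : ℕ).testBit m else (a : ℕ).testBit (m - n) := by
  rw [polarIndex_val, Nat.testBit_two_pow_mul_add _ i.isLt]

lemma polarG_succ_polarIndex (n : ℕ) (a b : Fin 2) (i j : Fin (2 ^ n)) :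
    polarG (n + 1) (polarIndex n (a, i)) (polarIndex n (b, j)) = polarF a b * polarG n i j := by
  simp [polarG, polarIndex, Matrix.reindex_apply]

lemma testBit_le_of_polarF_ne_zero {a b : Fin 2} (h : polarF a b ≠ 0) (m : ℕ) :
    (b : ℕ).testBit m ≤ (a : ℕ).testBit m := by
  fin_cases a <;> fin_cases b <;> simp_all [polarF]

lemma testBit_le_of_polarG_ne_zero :
    ∀ {n} {i j : Fin (2 ^ n)}, polarG n i j ≠ 0 → ∀ m, (j : ℕ).testBit m ≤ (i : ℕ).testBit m
  | 0, _, _, _, _ => by simp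
  | n + 1, i, j, h, m => by
    obtain ⟨⟨a, i⟩, rfl⟩ := (polarIndex n).surjective i
    obtain ⟨⟨b, j⟩, rfl⟩ := (polarIndex n).surjective j
    rw [polarG_succ_polarIndex, mul_ne_zero_iff] at h
    rw [testBit_polarIndex, testBit_polarIndex]
    split_ifs
    · exact testBit_le_of_polarG_ne_zero h.2 m
    · exact testBit_le_of_polarF_ne_zero h.1 _

/-- Theorem 1, BEC instantiation: if the information set `A` is chosen
by the polar coding principle, i.e. `Z_ε(j) < Z_ε(i)` for all `j ∈ A`, `i ∉ A`, then
`G_{i,j} = 0` for every `j ∈ A` and `i ∉ A`: no row of `G` indexed outside `A`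
intersects a column of `G` indexed inside `A`. -/
theorem polarG_frozen_row_not_intersect (n : ℕ) (ε : ℝ) (hε : ε ∈ Set.Icc (0 : ℝ) 1)
    (A : Finset (Fin (2 ^ n)))
    (hA : ∀ j ∈ A, ∀ i ∉ A, Zbit ε n j < Zbit ε n i) :
    ∀ j ∈ A, ∀ i ∉ A, polarG n i j = 0 := by
  intro j hj i hi
  by_contra hG
  have hbits : (fun m : Fin n => (j : ℕ).testBit m) ≤ fun m : Fin n => (i : ℕ).testBit m :=
    fun m => testBit_le_of_polarG_ne_zero hG m
  exact (hA j hj i hi).not_ge (Zrec_antitone hε n hbits)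
end

section
/- (Bit-reversal invariance) Let n be a natural number and let σ : Fin 2^n → Fin 2^n be the bit-reversal permutation, i.e., for every m < n, the m-th binary digit of σ(i) equals the (n−1−m)-th binary digit of i. Then for all i, j ∈ Fin 2^n, the entries of G = F^{⊗n} over GF(2) satisfy G_{σ(i), σ(j)} = G_{i,j}; consequently, if B is the permutation matrix of σ (so that (BG)_{i,j} = G_{σ(i),j}), then for any A ⊆ Fin 2^n and for all a, a' ∈ A, (BG)_{a, σ(a')} = G_{a, a'}, i.e., the submatrix of BG with rows A and columns σ(A) equals the submatrix G_{AA}. -/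
/-! Expanding the Kronecker power entrywise, `G i j = ∏ₘ F (iₘ, jₘ)` over the bit positions
`m < n`. Reversing the bits of both `i` and `j` only reorders this product, so
`G (σ i) (σ j) = G i j`; the statement about `B * G` follows because left multiplication by the
permutation matrix of `σ` just reads row `σ a` of `G`. -/

open Finset

def bitFin (x m : ℕ) : Fin 2 := if x.testBit m then 1 else 0

lemma bitFin_mod_two_pow {x m n : ℕ} (hm : m < n) : bitFin (x % 2 ^ n) m = bitFin x m := by
  simp [bitFin, Nat.testBit_mod_two_pow, hm]

lemma mk_div_two_pow_eq_bitFin {x n : ℕ} (h : x / 2 ^ n < 2) :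
    (⟨x / 2 ^ n, h⟩ : Fin 2) = bitFin x n := by
  simp only [bitFin, Nat.testBit_eq_decide_div_mod_eq, Nat.mod_eq_of_lt h]
  interval_cases x / 2 ^ n <;> rfl

-- `finProdFinEquiv.symm` splits an index of `Fin (2 * 2 ^ n)` into `(x / 2 ^ n, x % 2 ^ n)`.
lemma polarG_succ_apply (n : ℕ) (i j : Fin (2 ^ (n + 1))) :
    polarG (n + 1) i j = polarF (bitFin i n) (bitFin j n) *
      polarG n ⟨i % 2 ^ n, Nat.mod_lt _ (by positivity)⟩
        ⟨j % 2 ^ n, Nat.mod_lt _ (by positivity)⟩ := by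
  have hdiv (x : Fin (2 ^ (n + 1))) : (x : ℕ) / 2 ^ n < 2 :=
    Nat.div_lt_of_lt_mul (by simpa [pow_succ, mul_comm] using x.2)
  rw [← mk_div_two_pow_eq_bitFin (hdiv i), ← mk_div_two_pow_eq_bitFin (hdiv j)]
  rfl

lemma polarG_apply (n : ℕ) (i j : Fin (2 ^ n)) :
    polarG n i j = ∏ m ∈ range n, polarF (bitFin i m) (bitFin j m) := by
  induction n with
  | zero => simp [polarG, Matrix.one_apply, Fin.fin_one_eq_zero]
  | succ n ih =>
    rw [polarG_succ_apply, ih, prod_range_succ, mul_comm]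
    congr 1
    refine prod_congr rfl fun m hm => ?_
    rw [bitFin_mod_two_pow (mem_range.mp hm), bitFin_mod_two_pow (mem_range.mp hm)]

lemma polarG_apply_eq_of_testBit_reverse {n : ℕ} {i j i' j' : Fin (2 ^ n)}
    (hi : ∀ m < n, (i' : ℕ).testBit m = (i : ℕ).testBit (n - 1 - m))
    (hj : ∀ m < n, (j' : ℕ).testBit m = (j : ℕ).testBit (n - 1 - m)) :
    polarG n i' j' = polarG n i j := by
  rw [polarG_apply, polarG_apply, ← prod_range_reflect]
  refine prod_congr rfl fun m hm => ?_
  have hmn := mem_range.mp hm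
  have hm' : n - 1 - m < n := by omega
  simp only [bitFin, hi _ hm', hj _ hm', show n - 1 - (n - 1 - m) = m by omega]

lemma Matrix.mul_apply_of_eq_ite {l m o α : Type*} [Fintype m] [DecidableEq m]
    [NonAssocSemiring α] (σ : l → m) {B : Matrix l m α}
    (hB : ∀ i j, B i j = if σ i = j then 1 else 0)
    (M : Matrix m o α) (i : l) (k : o) : (B * M) i k = M (σ i) k := by
  simp [Matrix.mul_apply, hB]

/-- bit-reversal invariance: if `σ` is the bit-reversal permutation of
`Fin (2^n)` (the `m`-th binary digit of `σ i` is the `(n-1-m)`-th digit of `i` for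
all `m < n`), then `G_{σ(i),σ(j)} = G_{i,j}` for all `i, j`; consequently, if `B` is
the permutation matrix of `σ` (so `(B*G)_{i,j} = G_{σ(i),j}`), then for any `A` and
all `a, a' ∈ A` one has `(B*G)_{a,σ(a')} = G_{a,a'}`, i.e. the submatrix of `B*G`
with rows `A` and columns `σ(A)` is the submatrix `G_{AA}`. -/
theorem polarG_bit_reversal_invariance (n : ℕ) (σ : Equiv.Perm (Fin (2 ^ n)))
    (hσ : ∀ i : Fin (2 ^ n), ∀ m < n,
      Nat.testBit ((σ i : Fin (2 ^ n)) : ℕ) m = Nat.testBit (i : ℕ) (n - 1 - m)) :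
    (∀ i j : Fin (2 ^ n), polarG n (σ i) (σ j) = polarG n i j) ∧
    (∀ B : Matrix (Fin (2 ^ n)) (Fin (2 ^ n)) (ZMod 2),
      (∀ i j : Fin (2 ^ n), B i j = if σ i = j then 1 else 0) →
      ∀ A : Finset (Fin (2 ^ n)), ∀ a ∈ A, ∀ a' ∈ A,
        (B * polarG n) a (σ a') = polarG n a a') := by
  have invariance (i j : Fin (2 ^ n)) : polarG n (σ i) (σ j) = polarG n i j :=
    polarG_apply_eq_of_testBit_reverse (hσ i) (hσ j)
  refine ⟨invariance, fun B hB _ a _ a' _ => ?_⟩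
  rw [Matrix.mul_apply_of_eq_ite σ hB, invariance]
end

section
/- (Systematic gain under the composite error model with p₀ = 1/2) Let n ≥ 1, N = 2^n, and let A ⊆ Fin N contain the last index N−1 and satisfy G_{i,j} = 0 for every j ∈ A and i ∉ A. Suppose A is partitioned into disjoint sets S₁ and S₂ with A = S₁ ∪ S₂, every element of S₁ smaller than every element of S₂, and N−1 ∈ S₂. For each assignment w : S₁ → ZMod 2, let v_w : Fin N → ZMod 2 be the vector whose coordinates on S₁ are given by w, whose coordinates on S₂ all equal 1, and which is 0 outside A. Then: (1) the average over all 2^{|S₁|} assignments w of the Hamming weight of v_w equals |S₁|/2 + |S₂|; (2) the average over all w of the Hamming weight of (v_w G) restricted to A equals 1 + |S₁|/2. Consequently the systematic gain γ, defined as the ratio of these two averages, equals (|S₁|/2 + |S₂|)/(1 + |S₁|/2). -/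
/-- The last index `2^n - 1` of `Fin (2^n)`. -/
def lastIdx (n : ℕ) : Fin (2 ^ n) := ⟨2 ^ n - 1, by have := Nat.two_pow_pos n; omega⟩

/-- The error vector of the composite model: coordinates on `S₁` are given by the
assignment `w`, coordinates on `S₂` all equal `1`, and all other coordinates are `0`. -/
def modelVec (n : ℕ) (S₁ S₂ : Finset (Fin (2 ^ n))) (w : {a // a ∈ S₁} → ZMod 2) :
    Fin (2 ^ n) → ZMod 2 :=
  fun i => if h : i ∈ S₁ then w ⟨i, h⟩ else if i ∈ S₂ then 1 else 0

/-- Re-encoding `v ↦ vG` with the polar generator matrix. -/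
def reencode (n : ℕ) (v : Fin (2 ^ n) → ZMod 2) : Fin (2 ^ n) → ZMod 2 :=
  fun j => ∑ i : Fin (2 ^ n), v i * polarG n i j

/-- The Hamming weight of a vector: the number of nonzero coordinates. -/
def hw (n : ℕ) (v : Fin (2 ^ n) → ZMod 2) : ℕ :=
  (Finset.univ.filter fun i => v i ≠ 0).card

/-- The Hamming weight of a vector restricted to the coordinates in `A`. -/
def hwOn (n : ℕ) (A : Finset (Fin (2 ^ n))) (v : Fin (2 ^ n) → ZMod 2) : ℕ :=
  (A.filter fun j => v j ≠ 0).card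

/-!
`G` is lower unitriangular and its column sums vanish except at the last index. Flipping `w a`
flips coordinate `a` of `v_w` and, as `G a a = 1`, coordinate `a` of `v_w G`; so on `S₁` each
coordinate of either vector is nonzero for exactly half of the assignments. On `S₂` the vector
`v_w` is identically `1`, while the columns of `G` indexed by `S₂` vanish on `S₁` (triangularity)
and outside `A` (frozenness), so there `v_w G` is the column sum: nonzero only at `N - 1`.
-/

open Finset
open scoped Matrix

abbrev polarIdx (n : ℕ) : Fin 2 × Fin (2 ^ n) ≃ Fin (2 ^ (n + 1)) :=
  finProdFinEquiv.trans (finCongr (by ring))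

lemma polarIdx_val (n : ℕ) (a : Fin 2) (x : Fin (2 ^ n)) :
    (polarIdx n (a, x) : ℕ) = x + 2 ^ n * a := by
  simp [finProdFinEquiv]

lemma polarG_succ_polarIdx (n : ℕ) (a b : Fin 2) (x y : Fin (2 ^ n)) :
    polarG (n + 1) (polarIdx n (a, x)) (polarIdx n (b, y)) = polarF a b * polarG n x y := by
  simp [polarG, Matrix.reindex_apply]

lemma lastIdx_succ (n : ℕ) : lastIdx (n + 1) = polarIdx n (1, lastIdx n) := by
  ext
  rw [polarIdx_val]
  simp only [lastIdx, pow_succ, Fin.val_one]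
  have := Nat.two_pow_pos n
  omega

lemma polarG_eq_zero_of_lt : ∀ (n : ℕ) {i j : Fin (2 ^ n)}, i < j → polarG n i j = 0
  | 0, i, j, h => by omega
  | n + 1, i, j, h => by
    obtain ⟨⟨a, x⟩, rfl⟩ := (polarIdx n).surjective i
    obtain ⟨⟨b, y⟩, rfl⟩ := (polarIdx n).surjective j
    rw [polarG_succ_polarIdx]
    rw [Fin.lt_def, polarIdx_val, polarIdx_val] at h
    rcases lt_trichotomy a b with hab | rfl | hab
    · rw [show a = 0 by omega, show b = 1 by omega]
      exact zero_mul _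
    · rw [polarG_eq_zero_of_lt n (show x < y by omega), mul_zero]
    · have ha : (a : ℕ) = 1 := by omega
      have hb : (b : ℕ) = 0 := by omega
      rw [ha, hb] at h
      omega

lemma polarG_self : ∀ (n : ℕ) (i : Fin (2 ^ n)), polarG n i i = 1
  | 0, _ => Matrix.one_apply_eq _
  | n + 1, i => by
    obtain ⟨⟨a, x⟩, rfl⟩ := (polarIdx n).surjective i
    rw [polarG_succ_polarIdx, polarG_self n, mul_one]
    fin_cases a <;> rfl

lemma sum_polarG_apply : ∀ (n : ℕ) (j : Fin (2 ^ n)),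
    ∑ i, polarG n i j = if j = lastIdx n then 1 else 0
  | 0, j => by revert j; decide
  | n + 1, j => by
    obtain ⟨⟨b, y⟩, rfl⟩ := (polarIdx n).surjective j
    have hF : ∑ a, polarF a b = if b = 1 then 1 else 0 := by fin_cases b <;> rfl
    simp only [← (polarIdx n).sum_comp, Fintype.sum_prod_type, polarG_succ_polarIdx,
      ← Finset.sum_mul_sum, hF, sum_polarG_apply n, lastIdx_succ, (polarIdx n).apply_eq_iff_eq,
      Prod.mk.injEq, ite_zero_mul_ite_zero, mul_one]

/-- The translation `w ↦ w + eₐ` is a bijection exchanging `{f = 0}` and `{f ≠ 0}`. -/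
lemma sum_boole_ne_zero_of_flip {ι : Type*} [Fintype ι] [DecidableEq ι]
    (f : (ι → ZMod 2) → ZMod 2) (a : ι)
    (hf : ∀ w, f (w + Pi.single a 1) = f w + 1) :
    ∑ w, (if f w ≠ 0 then 1 else 0 : ℝ) = 2 ^ Fintype.card ι / 2 := by
  have hflip : ∀ x : ZMod 2, x + 1 ≠ 0 ↔ x = 0 := by decide
  have hswap : ∑ w, (if f w ≠ 0 then 1 else 0 : ℝ) = ∑ w, (if f w = 0 then 1 else 0 : ℝ) := by
    rw [← Equiv.sum_comp (Equiv.addRight (Pi.single a 1 : ι → ZMod 2))]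
    simp only [Equiv.coe_addRight, hf, hflip]
  have htotal : ∑ w, ((if f w ≠ 0 then 1 else 0 : ℝ) + if f w = 0 then 1 else 0)
      = 2 ^ Fintype.card ι := by
    have : ∀ w, ((if f w ≠ 0 then 1 else 0 : ℝ) + if f w = 0 then 1 else 0) = 1 := by
      intro w; by_cases h : f w = 0 <;> simp [h]
    simp only [this, sum_const, card_univ, Fintype.card_fun, ZMod.card, nsmul_eq_mul, mul_one]
    push_cast; rfl
  rw [sum_add_distrib, ← hswap] at htotal
  linarith

lemma average_card_filter_ne_zero_of_flip {α : Type*} [DecidableEq α] (s : Finset α)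
    (F : (s → ZMod 2) → α → ZMod 2)
    (hF : ∀ w (a : s), F (w + Pi.single a 1) a = F w a + 1) :
    (∑ w, (#{i ∈ s | F w i ≠ 0} : ℝ)) / 2 ^ #s = #s / 2 := by
  have hcount : ∀ i : s, ∑ w, (if F w i ≠ 0 then 1 else 0 : ℝ) = 2 ^ #s / 2 := by
    intro i
    rw [sum_boole_ne_zero_of_flip (F · i) i (hF · i), Fintype.card_coe]
  simp only [card_filter, Nat.cast_sum, Nat.cast_ite, Nat.cast_one, Nat.cast_zero]
  rw [sum_comm, ← sum_coe_sort s]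
  simp only [hcount, sum_const, card_univ, Fintype.card_coe, nsmul_eq_mul]
  field_simp

lemma sum_add_const_div_two_pow_card {α : Type*} [DecidableEq α] (s : Finset α)
    (g : (s → ZMod 2) → ℝ) (c : ℝ) :
    (∑ w, (g w + c)) / 2 ^ #s = (∑ w, g w) / 2 ^ #s + c := by
  rw [sum_add_distrib, sum_const, card_univ, Fintype.card_fun, ZMod.card, Fintype.card_coe,
    nsmul_eq_mul]
  field_simp
  push_cast
  ring

section CompositeModel

variable {n : ℕ} {S₁ S₂ : Finset (Fin (2 ^ n))}

lemma reencode_eq_vecMul (v : Fin (2 ^ n) → ZMod 2) : reencode n v = v ᵥ* polarG n := rfl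

lemma modelVec_add_single (w : S₁ → ZMod 2) (a : S₁) :
    modelVec n S₁ S₂ (w + Pi.single a 1)
      = modelVec n S₁ S₂ w + Pi.single (a : Fin (2 ^ n)) 1 := by
  ext i
  by_cases hi : i ∈ S₁
  · obtain rfl | hia := eq_or_ne (⟨i, hi⟩ : S₁) a
    · simp [modelVec, hi]
    · have : i ≠ a := fun h => hia (Subtype.ext h)
      simp [modelVec, hi, hia, this]
  · have : i ≠ a := fun h => hi (h ▸ a.2)
    simp [modelVec, hi, this]

lemma hw_modelVec (hdisj : Disjoint S₁ S₂) (w : S₁ → ZMod 2) :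
    hw n (modelVec n S₁ S₂ w) = #{i ∈ S₁ | modelVec n S₁ S₂ w i ≠ 0} + #S₂ := by
  have hsupp : filter (fun i => modelVec n S₁ S₂ w i ≠ 0) univ
      = {i ∈ S₁ | modelVec n S₁ S₂ w i ≠ 0} ∪ S₂ := by
    ext i
    simp only [mem_filter, mem_univ, true_and, mem_union]
    by_cases h₁ : i ∈ S₁
    · simp [h₁, disjoint_left.mp hdisj h₁]
    · by_cases h₂ : i ∈ S₂ <;> simp [modelVec, h₁, h₂]
  rw [hw, hsupp, card_union_of_disjoint (hdisj.mono_left (filter_subset _ _))]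

lemma reencode_modelVec_of_mem_right (horder : ∀ a ∈ S₁, ∀ b ∈ S₂, a < b)
    (hfrozen : ∀ j ∈ S₁ ∪ S₂, ∀ i ∉ S₁ ∪ S₂, polarG n i j = 0)
    (w : S₁ → ZMod 2) {j : Fin (2 ^ n)} (hj : j ∈ S₂) :
    reencode n (modelVec n S₁ S₂ w) j = if j = lastIdx n then 1 else 0 := by
  rw [← sum_polarG_apply]
  refine sum_congr rfl fun i _ => ?_
  by_cases h₁ : i ∈ S₁
  · simp [polarG_eq_zero_of_lt n (horder i h₁ j hj)]
  by_cases h₂ : i ∈ S₂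
  · simp [modelVec, h₁, h₂]
  · simp [hfrozen j (mem_union_right _ hj) i (by simp [h₁, h₂])]

lemma hwOn_reencode_modelVec (hdisj : Disjoint S₁ S₂) (horder : ∀ a ∈ S₁, ∀ b ∈ S₂, a < b)
    (hlast : lastIdx n ∈ S₂) (hfrozen : ∀ j ∈ S₁ ∪ S₂, ∀ i ∉ S₁ ∪ S₂, polarG n i j = 0)
    (w : S₁ → ZMod 2) :
    hwOn n (S₁ ∪ S₂) (reencode n (modelVec n S₁ S₂ w))
      = #{j ∈ S₁ | reencode n (modelVec n S₁ S₂ w) j ≠ 0} + 1 := by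
  have hS₂ : {j ∈ S₂ | reencode n (modelVec n S₁ S₂ w) j ≠ 0} = {lastIdx n} := by
    ext j
    simp only [mem_filter, mem_singleton]
    constructor
    · rintro ⟨hj, hne⟩
      by_contra hjl
      simp [reencode_modelVec_of_mem_right horder hfrozen w hj, hjl] at hne
    · rintro rfl
      simp [reencode_modelVec_of_mem_right horder hfrozen w hlast, hlast]
  rw [hwOn, filter_union, card_union_of_disjoint (disjoint_filter_filter hdisj), hS₂,
    card_singleton]

lemma reencode_modelVec_add_single (w : S₁ → ZMod 2) (a : S₁) :
    reencode n (modelVec n S₁ S₂ (w + Pi.single a 1)) a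
      = reencode n (modelVec n S₁ S₂ w) a + 1 := by
  simp [reencode_eq_vecMul, modelVec_add_single, Matrix.add_vecMul, polarG_self]

end CompositeModel

theorem systematic_gain_composite_model_general (n : ℕ)
    (S₁ S₂ A : Finset (Fin (2 ^ n))) (hA : A = S₁ ∪ S₂) (hdisj : Disjoint S₁ S₂)
    (horder : ∀ a ∈ S₁, ∀ b ∈ S₂, a < b) (hlast : lastIdx n ∈ S₂)
    (hfrozen : ∀ j ∈ A, ∀ i ∉ A, polarG n i j = 0) :
    (∑ w : {a // a ∈ S₁} → ZMod 2, (hw n (modelVec n S₁ S₂ w) : ℝ)) / 2 ^ S₁.card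
        = S₁.card / 2 + S₂.card ∧
    (∑ w : {a // a ∈ S₁} → ZMod 2,
        (hwOn n A (reencode n (modelVec n S₁ S₂ w)) : ℝ)) / 2 ^ S₁.card
        = 1 + S₁.card / 2 ∧
    ((∑ w : {a // a ∈ S₁} → ZMod 2, (hw n (modelVec n S₁ S₂ w) : ℝ)) / 2 ^ S₁.card) /
      ((∑ w : {a // a ∈ S₁} → ZMod 2,
        (hwOn n A (reencode n (modelVec n S₁ S₂ w)) : ℝ)) / 2 ^ S₁.card)
        = (S₁.card / 2 + S₂.card) / (1 + S₁.card / 2) := by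
  subst hA
  have hinput : (∑ w, (hw n (modelVec n S₁ S₂ w) : ℝ)) / 2 ^ #S₁ = #S₁ / 2 + #S₂ := by
    simp only [hw_modelVec hdisj, Nat.cast_add]
    rw [sum_add_const_div_two_pow_card,
      average_card_filter_ne_zero_of_flip S₁ (modelVec n S₁ S₂) fun w a => by
        simp [modelVec_add_single]]
  have houtput : (∑ w, (hwOn n (S₁ ∪ S₂) (reencode n (modelVec n S₁ S₂ w)) : ℝ)) / 2 ^ #S₁
      = 1 + #S₁ / 2 := by
    simp only [hwOn_reencode_modelVec hdisj horder hlast hfrozen, Nat.cast_add, Nat.cast_one]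
    rw [sum_add_const_div_two_pow_card, average_card_filter_ne_zero_of_flip S₁
      (fun w => reencode n (modelVec n S₁ S₂ w)) reencode_modelVec_add_single, add_comm]
  exact ⟨hinput, houtput, by rw [hinput, houtput]⟩

/-- systematic gain under the composite error model with `p₀ = 1/2`:
with `A = S₁ ∪ S₂` as in the composite model, (1) the average Hamming weight of
`v_w` over all assignments `w` equals `|S₁|/2 + |S₂|`; (2) the average Hamming
weight of `v_w G` restricted to `A` equals `1 + |S₁|/2`; consequently the
systematic gain, the ratio of the two averages, equals
`(|S₁|/2 + |S₂|)/(1 + |S₁|/2)`. -/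
theorem systematic_gain_composite_model (n : ℕ) (hn : 1 ≤ n)
    (S₁ S₂ A : Finset (Fin (2 ^ n))) (hA : A = S₁ ∪ S₂) (hdisj : Disjoint S₁ S₂)
    (horder : ∀ a ∈ S₁, ∀ b ∈ S₂, a < b) (hlast : lastIdx n ∈ S₂)
    (hfrozen : ∀ j ∈ A, ∀ i ∉ A, polarG n i j = 0) :
    (∑ w : {a // a ∈ S₁} → ZMod 2, (hw n (modelVec n S₁ S₂ w) : ℝ)) / 2 ^ S₁.card
        = S₁.card / 2 + S₂.card ∧
    (∑ w : {a // a ∈ S₁} → ZMod 2,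
        (hwOn n A (reencode n (modelVec n S₁ S₂ w)) : ℝ)) / 2 ^ S₁.card
        = 1 + S₁.card / 2 ∧
    ((∑ w : {a // a ∈ S₁} → ZMod 2, (hw n (modelVec n S₁ S₂ w) : ℝ)) / 2 ^ S₁.card) /
      ((∑ w : {a // a ∈ S₁} → ZMod 2,
        (hwOn n A (reencode n (modelVec n S₁ S₂ w)) : ℝ)) / 2 ^ S₁.card)
        = (S₁.card / 2 + S₂.card) / (1 + S₁.card / 2) :=
  systematic_gain_composite_model_general n S₁ S₂ A hA hdisj horder hlast hfrozen
end
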